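/- arXiv:1807.11612 — 8 statements merged into one kernel-verified Lean document; each statement's English description precedes it below -/
import Mathlib

section
/- Let G₀ be bounded selfadjoint positive definite, J a hermitian symmetry commuting with G₀, and S bounded selfadjoint with |(Sψ,ψ)| ≤ b(G₀ψ,ψ) for all ψ, where b < 1. Set G = G₀ + S, H = JG, H₀ = JG₀. Then the spectrum of H avoids the interval (−α, α) where α = (1−b)·inf{|λ| : λ ∈ σ(H₀)}; equivalently every λ ∈ σ(H) satisfies |λ| ≥ α. -/
open scoped InnerProductSpace

/-! The spectrum of a unit `a` of a Banach algebra avoids the open disc of radius `‖a⁻¹‖⁻¹`, and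
for a selfadjoint unit of a C⋆-algebra that radius is attained. As `J` is a selfadjoint involution,
hence unitary, `‖(JG)⁻¹‖ = ‖G⁻¹‖`; so `inf |σ(H₀)| = ‖G₀⁻¹‖⁻¹` and `σ(H)` avoids the disc of radius
`‖G⁻¹‖⁻¹`. Finally the hypothesis on `S` says `(1 - b) G₀ ≤ G`, and operator antitonicity of
inversion on strictly positive elements gives `‖G⁻¹‖ ≤ ‖G₀⁻¹‖ / (1 - b)`. -/

theorem spectrum.inv_norm_inv_le_norm_of_mem {𝕜 A : Type*} [NormedField 𝕜] [NormedRing A]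
    [NormedAlgebra 𝕜 A] [CompleteSpace A] [NormOneClass A] {a : Aˣ} {k : 𝕜}
    (hk : k ∈ spectrum 𝕜 (a : A)) : ‖(↑a⁻¹ : A)‖⁻¹ ≤ ‖k‖ := by
  have hk₀ : 0 < ‖k‖ := norm_pos_iff.mpr (spectrum.ne_zero_of_mem_of_unit hk)
  have hk_inv : k⁻¹ ∈ spectrum 𝕜 (↑a⁻¹ : A) := spectrum.inv₀_mem_iff.mp (by rwa [inv_inv])
  refine inv_le_of_inv_le₀ hk₀ ?_
  simpa using spectrum.norm_le_norm_of_mem hk_inv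

section CStarAlgebra

variable {A : Type*} [CStarAlgebra A]

theorem IsSelfAdjoint.sInf_norm_spectrum_le_inv_norm_inv [Nontrivial A] {a : Aˣ}
    (ha : IsSelfAdjoint (a : A)) : sInf ((‖·‖) '' spectrum ℂ (a : A)) ≤ ‖(↑a⁻¹ : A)‖⁻¹ := by
  have ha_inv : IsSelfAdjoint (↑a⁻¹ : A) := by
    have ha' : star a = a := Units.ext ha
    rw [IsSelfAdjoint, ← Units.coe_star_inv, ha']
  obtain ⟨s, hs, hs_norm⟩ : ∃ s : ℝ, s ∈ spectrum ℝ (↑a⁻¹ : A) ∧ ‖s‖ = ‖(↑a⁻¹ : A)‖ := by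
    rcases CStarAlgebra.norm_or_neg_norm_mem_spectrum ha_inv with h | h
    · exact ⟨_, h, by simp⟩
    · exact ⟨_, h, by simp⟩
  have hs' : ((s : ℂ)⁻¹)⁻¹ ∈ spectrum ℂ (↑a⁻¹ : A) := by
    simpa using spectrum.algebraMap_mem ℂ hs
  refine csInf_le ⟨0, ?_⟩ ⟨_, spectrum.inv₀_mem_iff.mpr hs', by simp [hs_norm]⟩
  rintro _ ⟨k, -, rfl⟩
  exact norm_nonneg k

theorem Unitary.norm_inv_toUnits_mul (u : unitary A) (g : Aˣ) :
    ‖(↑(Unitary.toUnits u * g)⁻¹ : A)‖ = ‖(↑g⁻¹ : A)‖ := by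
  simp only [mul_inv_rev, Units.val_mul, val_inv_toUnits_apply, CStarRing.norm_mul_coe_unitary]

theorem CStarAlgebra.mul_inv_norm_inv_le_of_smul_le [PartialOrder A] [StarOrderedRing A]
    [Nontrivial A] {a b : Aˣ} {c : ℝ} (hc : 0 < c) (ha : 0 ≤ (a : A)) (hab : c • (a : A) ≤ b) :
    c * ‖(↑a⁻¹ : A)‖⁻¹ ≤ ‖(↑b⁻¹ : A)‖⁻¹ := by
  set c' : ℝˣ := Units.mk0 c hc.ne'
  have hca : 0 ≤ ((c' • a : Aˣ) : A) := by simpa [c', Units.val_smul] using smul_nonneg hc.le ha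
  have hinv := CStarAlgebra.norm_le_norm_of_nonneg_of_le (CFC.inv_nonneg_of_nonneg b (hca.trans hab))
    (CStarAlgebra.inv_le_inv hca (by simpa [c', Units.val_smul] using hab))
  rw [Units.smul_inv, Units.val_smul, Units.smul_def, norm_smul] at hinv
  calc c * ‖(↑a⁻¹ : A)‖⁻¹ = (c⁻¹ * ‖(↑a⁻¹ : A)‖)⁻¹ := by rw [mul_inv, inv_inv]
    _ ≤ ‖(↑b⁻¹ : A)‖⁻¹ := inv_anti₀ (Units.norm_pos b⁻¹) (by simpa [c', abs_of_pos hc] using hinv)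

end CStarAlgebra

theorem ContinuousLinearMap.le_of_re_inner_le {𝕜 E : Type*} [RCLike 𝕜] [NormedAddCommGroup E]
    [InnerProductSpace 𝕜 E] [CompleteSpace E] {T U : E →L[𝕜] E} (hT : IsSelfAdjoint T)
    (hU : IsSelfAdjoint U) (h : ∀ x, RCLike.re ⟪T x, x⟫_𝕜 ≤ RCLike.re ⟪U x, x⟫_𝕜) : T ≤ U := by
  rw [le_def, isPositive_def']
  refine ⟨hU.sub hT, fun x => ?_⟩
  simpa [reApplyInnerSelf, inner_sub_left] using h x

/-- the spectrum of `H = J(G₀ + S)` avoids `(-α, α)` with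
`α = (1-b)·inf |σ(JG₀)|`: every `λ ∈ σ(H)` satisfies `|λ| ≥ α`. -/
theorem stmt_3 {E : Type*} [NormedAddCommGroup E] [InnerProductSpace ℂ E] [CompleteSpace E]
    (J G₀ S : E →L[ℂ] E)
    (hJsa : IsSelfAdjoint J) (hJinv : J * J = 1) (hJcomm : J * G₀ = G₀ * J)
    (hG₀sa : IsSelfAdjoint G₀) (γ : ℝ) (hγ : 0 < γ)
    (hG₀pos : ∀ ψ : E, γ * ‖ψ‖ ^ 2 ≤ (⟪G₀ ψ, ψ⟫_ℂ).re)
    (hSsa : IsSelfAdjoint S) (b : ℝ) (hb : b < 1)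
    (hSb : ∀ ψ : E, |(⟪S ψ, ψ⟫_ℂ).re| ≤ b * (⟪G₀ ψ, ψ⟫_ℂ).re) :
    ∀ lam ∈ spectrum ℂ (J * (G₀ + S)),
      (1 - b) * sInf ((fun z : ℂ => ‖z‖) '' spectrum ℂ (J * G₀)) ≤
        ‖lam‖ := by
  intro lam hlam
  nontriviality (E →L[ℂ] E)
  have hγG₀ : algebraMap ℝ (E →L[ℂ] E) γ ≤ G₀ :=
    ContinuousLinearMap.le_of_re_inner_le (.algebraMap _ (.all γ)) hG₀sa fun x => by
      rw [Algebra.algebraMap_eq_smul_one, smul_apply, inner_smul_left_eq_smul, RCLike.smul_re,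
        one_apply_eq_self, inner_self_eq_norm_sq]
      exact hG₀pos x
  have hG₀ : IsStrictlyPositive G₀ := (isStrictlyPositive_algebraMap hγ).of_le hγG₀
  have hb' : 0 < 1 - b := sub_pos.2 hb
  have hG₀G : (1 - b) • G₀ ≤ G₀ + S :=
    ContinuousLinearMap.le_of_re_inner_le ((IsSelfAdjoint.all (1 - b)).smul hG₀sa)
      (hG₀sa.add hSsa) fun x => by
      rw [smul_apply, add_apply, inner_smul_left_eq_smul, inner_add_left, map_add, RCLike.smul_re]
      simp only [RCLike.re_to_complex]
      linarith [(abs_le.mp (hSb x)).1]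
  have hG : IsStrictlyPositive (G₀ + S) := (hG₀.smul hb').of_le hG₀G
  obtain ⟨g₀, rfl⟩ := hG₀.isUnit
  obtain ⟨g, hg⟩ := hG.isUnit
  let u : unitary (E →L[ℂ] E) :=
    ⟨J, Unitary.mem_iff.mpr ⟨by rw [hJsa.star_eq, hJinv], by rw [hJsa.star_eq, hJinv]⟩⟩
  have hH₀ : IsSelfAdjoint ((Unitary.toUnits u * g₀ : (E →L[ℂ] E)ˣ) : E →L[ℂ] E) := by
    change IsSelfAdjoint (J * g₀)
    rw [IsSelfAdjoint, star_mul, hG₀sa.star_eq, hJsa.star_eq, hJcomm]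
  calc (1 - b) * sInf ((fun z : ℂ => ‖z‖) '' spectrum ℂ (J * g₀))
      ≤ (1 - b) * ‖(↑g₀⁻¹ : E →L[ℂ] E)‖⁻¹ := by
        gcongr
        simpa [Unitary.norm_inv_toUnits_mul] using hH₀.sInf_norm_spectrum_le_inv_norm_inv
    _ ≤ ‖(↑g⁻¹ : E →L[ℂ] E)‖⁻¹ :=
        CStarAlgebra.mul_inv_norm_inv_le_of_smul_le hb' hG₀.nonneg (hg ▸ hG₀G)
    _ = ‖(↑(Unitary.toUnits u * g)⁻¹ : E →L[ℂ] E)‖⁻¹ := by rw [Unitary.norm_inv_toUnits_mul]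
    _ ≤ ‖lam‖ := spectrum.inv_norm_inv_le_norm_of_mem (by simpa [u, hg] using hlam)
end

section
/- Let G be bounded selfadjoint positive definite, J a hermitian symmetry, and G' = G^{1/2}(I + Δ)G^{1/2} where Δ is bounded selfadjoint with ‖Δ‖ ≤ κ < 1. If λ ∈ ℝ satisfies κ < reldist(λ, σ(JG)), where reldist(λ, Ω) = inf_{μ∈Ω} |(μ−λ)/μ|, then λ ∈ ρ(JG'), i.e., JG' − λ is boundedly invertible. -/
open scoped InnerProductSpace

/-!
With `S = G^{1/2} J G^{1/2}` (selfadjoint, invertible, similar to `JG`) one has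
`JG' - λ = J G^{1/2} (A + Δ) G^{1/2}` for the selfadjoint operator `A = 1 - λ S⁻¹`.
The spectrum of `A` is `{(μ - λ)/μ : μ ∈ σ(JG)}`, so it stays at distance `reldist(λ, σ(JG)) > κ`
from `0`; for selfadjoint `A` this bounds `‖A⁻¹‖` by the reciprocal distance, and a Neumann series
shows that `A + Δ` is invertible since `‖Δ‖ ≤ κ`.
-/

noncomputable def relDist (lam : ℂ) (Ω : Set ℂ) : ℝ :=
  sInf ((fun μ : ℂ => ‖(μ - lam) / μ‖) '' Ω)

lemma relDist_le {z μ : ℂ} {Ω : Set ℂ} (hμ : μ ∈ Ω) : relDist z Ω ≤ ‖(μ - z) / μ‖ :=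
  csInf_le ⟨0, by rintro _ ⟨ν, -, rfl⟩; positivity⟩ ⟨μ, hμ, rfl⟩

lemma IsSelfAdjoint.units_inv {R : Type*} [Monoid R] [StarMul R] {u : Rˣ}
    (hu : IsSelfAdjoint (u : R)) : IsSelfAdjoint (↑u⁻¹ : R) := by
  rw [IsSelfAdjoint, ← Units.coe_star_inv, show star u = u from Units.ext hu.star_eq]

section CStarAlgebra

variable {A : Type*} [CStarAlgebra A]

lemma IsSelfAdjoint.norm_inv_le {u : Aˣ} (hu : IsSelfAdjoint (u : A)) {d : ℝ} (hd : 0 < d)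
    (h : ∀ ν ∈ spectrum ℂ (u : A), d ≤ ‖ν‖) : ‖(↑u⁻¹ : A)‖ ≤ d⁻¹ := by
  rw [← hu.units_inv.toReal_spectralRadius_complex_eq_norm]
  refine ENNReal.toReal_le_of_le_ofReal (by positivity) (iSup₂_le fun ν hν => ?_)
  rw [← spectrum.map_inv, Set.mem_inv] at hν
  have hν' := h _ hν
  rw [norm_inv] at hν'
  have hν0 : ν ≠ 0 := by rintro rfl; simp only [norm_zero, inv_zero] at hν'; linarith
  rw [← ENNReal.ofReal_coe_nnreal, coe_nnnorm]
  exact ENNReal.ofReal_le_ofReal ((le_inv_comm₀ hd (norm_pos_iff.mpr hν0)).mp hν')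

lemma IsSelfAdjoint.isUnit_add_of_norm_lt {a b : A} (ha : IsSelfAdjoint a) {d : ℝ}
    (h : ∀ ν ∈ spectrum ℂ a, d ≤ ‖ν‖) (hb : ‖b‖ < d) : IsUnit (a + b) := by
  have hd : 0 < d := (norm_nonneg b).trans_lt hb
  obtain ⟨u, rfl⟩ : IsUnit a := spectrum.zero_notMem_iff ℂ |>.mp fun h0 => by
    simpa using (h 0 h0).trans_lt' hd
  have hsmall : ‖-(↑u⁻¹ * b)‖ < 1 := calc
    ‖-(↑u⁻¹ * b)‖ ≤ ‖(↑u⁻¹ : A)‖ * ‖b‖ := (norm_neg _).trans_le (norm_mul_le _ _)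
    _ ≤ d⁻¹ * ‖b‖ := by gcongr; exact ha.norm_inv_le hd h
    _ < d⁻¹ * d := by gcongr
    _ = 1 := inv_mul_cancel₀ hd.ne'
  have hfactor : (u : A) + b = u * (1 - -(↑u⁻¹ * b)) := by
    rw [sub_neg_eq_add, mul_add, mul_one, ← mul_assoc, Units.mul_inv, one_mul]
  exact hfactor ▸ u.isUnit.mul (Units.oneSub _ hsmall).isUnit

end CStarAlgebra

lemma spectrum.one_sub_smul_units_inv {A : Type*} [NormedRing A] [NormedAlgebra ℂ A]
    [CompleteSpace A] (u : Aˣ) (z : ℂ) :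
    spectrum ℂ (1 - z • (↑u⁻¹ : A)) = (fun μ => (μ - z) / μ) '' spectrum ℂ (u : A) := by
  cases subsingleton_or_nontrivial A
  · simp [spectrum.of_subsingleton]
  rw [← map_one (algebraMap ℂ A), ← spectrum.singleton_sub_eq,
    spectrum.smul_eq_smul _ _ (spectrum.nonempty _), ← spectrum.map_inv]
  ext ν
  simp only [Set.mem_sub, Set.mem_singleton_iff, Set.mem_smul_set, Set.mem_inv, Set.mem_image]
  constructor
  · rintro ⟨_, rfl, _, ⟨μ, hμ, rfl⟩, rfl⟩
    have hμ0 : μ ≠ 0 := inv_eq_zero.not.mp (spectrum.ne_zero_of_mem_of_unit hμ)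
    exact ⟨μ⁻¹, hμ, by field_simp; ring⟩
  · rintro ⟨μ, hμ, rfl⟩
    have hμ0 : μ ≠ 0 := spectrum.ne_zero_of_mem_of_unit hμ
    exact ⟨1, rfl, _, ⟨μ⁻¹, by rwa [inv_inv], rfl⟩, by rw [smul_eq_mul]; field_simp⟩

lemma spectrum.mul_units_comm {R A : Type*} [CommSemiring R] [Ring A] [Algebra R A]
    (a : A) (u : Aˣ) : spectrum R (a * u) = spectrum R (u * a) := by
  rw [← spectrum.units_conjugate (u := u), mul_assoc, mul_assoc, Units.mul_inv, mul_one]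

lemma algebraMap_sub_sandwich_eq {𝕜 R : Type*} [CommRing 𝕜] [Ring R] [Algebra 𝕜 R]
    (g j : Rˣ) (D : R) (z : 𝕜) :
    algebraMap 𝕜 R z - j * (g * (1 + D) * g) = -(j * g * (1 - z • ↑(g * j * g)⁻¹ + D) * g) := by
  have h : (j * g * ↑(g * j * g)⁻¹ * g : R) = 1 := by simp [mul_assoc]
  calc algebraMap 𝕜 R z - j * (g * (1 + D) * g)
      = z • (j * g * ↑(g * j * g)⁻¹ * g) - j * (g * (1 + D) * g) := by
        rw [h, Algebra.algebraMap_eq_smul_one]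
    _ = -(j * g * (1 - z • ↑(g * j * g)⁻¹ + D) * g) := by noncomm_ring

theorem stmt_4_general {E : Type*} [NormedAddCommGroup E] [InnerProductSpace ℂ E] [CompleteSpace E]
    (J G Ghalf Ginvhalf Δ : E →L[ℂ] E)
    (hJsa : IsSelfAdjoint J) (hJinv : J * J = 1)
    (hGhsa : IsSelfAdjoint Ghalf) (hGhsq : Ghalf * Ghalf = G)
    (hinv1 : Ghalf * Ginvhalf = 1) (hinv2 : Ginvhalf * Ghalf = 1)
    (κ : ℝ) (hΔκ : ‖Δ‖ ≤ κ)
    (G' : E →L[ℂ] E) (hG' : G' = Ghalf * (1 + Δ) * Ghalf)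
    (lam : ℝ) (hlam : κ < relDist (lam : ℂ) (spectrum ℂ (J * G))) :
    (lam : ℂ) ∉ spectrum ℂ (J * G') := by
  let g : (E →L[ℂ] E)ˣ := ⟨Ghalf, Ginvhalf, hinv1, hinv2⟩
  let j : (E →L[ℂ] E)ˣ := ⟨J, J, hJinv, hJinv⟩
  have hJG : J * G = ↑(j * g) * ↑g := by rw [Units.val_mul, mul_assoc, ← hGhsq]
  have hS : spectrum ℂ (J * G) = spectrum ℂ (↑(g * j * g) : E →L[ℂ] E) := by
    rw [hJG, spectrum.mul_units_comm, ← Units.val_mul, mul_assoc]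
  have hSsa : IsSelfAdjoint (↑(g * j * g) : E →L[ℂ] E) := hJsa.conjugate_self hGhsa
  set A : E →L[ℂ] E := 1 - (lam : ℂ) • ↑(g * j * g)⁻¹
  have hAsa : IsSelfAdjoint A :=
    (IsSelfAdjoint.one _).sub (.smul (Complex.conj_ofReal lam) hSsa.units_inv)
  have hAspec : ∀ ν ∈ spectrum ℂ A, relDist (lam : ℂ) (spectrum ℂ (J * G)) ≤ ‖ν‖ := by
    rw [spectrum.one_sub_smul_units_inv, hS]
    rintro _ ⟨μ, hμ, rfl⟩
    exact relDist_le hμ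
  have hunit : IsUnit (A + Δ) := hAsa.isUnit_add_of_norm_lt hAspec (hΔκ.trans_lt hlam)
  rw [spectrum.mem_iff, not_not, hG', algebraMap_sub_sandwich_eq g j Δ (lam : ℂ)]
  exact ((j * g).isUnit.mul hunit |>.mul g.isUnit).neg

/-- if `κ < reldist(λ, σ(JG))` then `λ ∈ ρ(JG')` for
`G' = G^{1/2}(I + Δ)G^{1/2}`, `‖Δ‖ ≤ κ < 1`. -/
theorem stmt_4 {E : Type*} [NormedAddCommGroup E] [InnerProductSpace ℂ E] [CompleteSpace E]
    (J G Ghalf Ginvhalf Δ : E →L[ℂ] E)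
    (hJsa : IsSelfAdjoint J) (hJinv : J * J = 1)
    (hGsa : IsSelfAdjoint G) (γ : ℝ) (hγ : 0 < γ)
    (hGpos : ∀ ψ : E, γ * ‖ψ‖ ^ 2 ≤ (⟪G ψ, ψ⟫_ℂ).re)
    (hGhsa : IsSelfAdjoint Ghalf) (hGhsq : Ghalf * Ghalf = G)
    (hGhpos : ∀ ψ : E, 0 ≤ (⟪Ghalf ψ, ψ⟫_ℂ).re)
    (hinv1 : Ghalf * Ginvhalf = 1) (hinv2 : Ginvhalf * Ghalf = 1)
    (hΔsa : IsSelfAdjoint Δ) (κ : ℝ) (hΔκ : ‖Δ‖ ≤ κ) (hκ : κ < 1)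
    (G' : E →L[ℂ] E) (hG' : G' = Ghalf * (1 + Δ) * Ghalf)
    (lam : ℝ) (hlam : κ < relDist (lam : ℂ) (spectrum ℂ (J * G))) :
    (lam : ℂ) ∉ spectrum ℂ (J * G') :=
  stmt_4_general J G Ghalf Ginvhalf Δ hJsa hJinv hGhsa hGhsq hinv1 hinv2 κ hΔκ G' hG' lam hlam
end

section
/- Let G be bounded selfadjoint positive definite, J a hermitian symmetry, κ < 1, and G' = G^{1/2}(I+Δ)G^{1/2} with Δ selfadjoint, ‖Δ‖ ≤ κ. If (λ⁻, λ⁺) ⊂ ρ(JG) with 0 < λ⁻ < λ⁺, then ((1+κ)λ⁻, (1−κ)λ⁺) ⊂ ρ(JG'). -/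
open scoped InnerProductSpace

/-!
Put `A = G^{1/2} J G^{1/2}`, a selfadjoint operator. Since `ab` and `ba` have the same nonzero
spectrum, `σ(JG) \ {0} = σ(A) \ {0}` and `σ(JG') \ {0} = σ(A(1+Δ)) \ {0}`, so `A` has no
spectrum in `(λ⁻, λ⁺)`. For `x` in that gap write `A(1+Δ) - x = (A - x)(1 + SΔ)` with
`S = A(A - x)⁻¹ = f(A)`, `f t = t / (t - x)`. By the continuous functional calculus,
`‖S‖ ≤ sup_{t ∈ σ(A)} |f t| ≤ max (λ⁻/(x - λ⁻)) (λ⁺/(λ⁺ - x))`, and `‖SΔ‖ ≤ κ‖S‖ < 1` exactly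
when `(1+κ)λ⁻ < x < (1-κ)λ⁺`; then `1 + SΔ` is invertible by the Neumann series.
-/

theorem spectrum.notMem_mul_one_add {𝕜 R : Type*} [CommSemiring 𝕜] [NormedRing R]
    [HasSummableGeomSeries R] [Algebra 𝕜 R] {a b s : R} {x : 𝕜} (hx : x ∉ spectrum 𝕜 a)
    (hs : (a - algebraMap 𝕜 R x) * s = a) (hsb : ‖s * b‖ < 1) :
    x ∉ spectrum 𝕜 (a * (1 + b)) := by
  have hfactor : algebraMap 𝕜 R x - a * (1 + b) = (algebraMap 𝕜 R x - a) * (1 - -(s * b)) :=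
    calc algebraMap 𝕜 R x - a * (1 + b)
        = algebraMap 𝕜 R x - a - (a - algebraMap 𝕜 R x) * s * b := by rw [hs]; noncomm_ring
      _ = _ := by noncomm_ring
  rw [spectrum.notMem_iff, hfactor]
  exact (spectrum.notMem_iff.mp hx).mul (isUnit_one_sub_of_norm_lt_one (by rwa [norm_neg]))

lemma abs_div_sub_le_max {lm lp x t : ℝ} (hlm : 0 < lm) (hx₁ : lm < x) (hx₂ : x < lp)
    (ht : t ≤ lm ∨ lp ≤ t) : |t / (t - x)| ≤ max (lm / (x - lm)) (lp / (lp - x)) := by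
  have hxlm : 0 < x - lm := sub_pos.mpr hx₁
  have hlpx : 0 < lp - x := sub_pos.mpr hx₂
  rcases ht with ht | ht
  · rw [abs_div, abs_of_neg (a := t - x) (by linarith), neg_sub]
    rcases le_or_gt t 0 with ht₀ | ht₀
    · refine le_max_of_le_right ?_
      rw [abs_of_nonpos ht₀, div_le_div_iff₀ (by linarith) hlpx]
      nlinarith
    · refine le_max_of_le_left ?_
      rw [abs_of_pos ht₀]
      exact div_le_div₀ hlm.le ht hxlm (by linarith)
  · refine le_max_of_le_right ?_
    rw [abs_of_pos (div_pos (by linarith) (by linarith)), div_le_div_iff₀ (by linarith) hlpx]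
    nlinarith

section ContinuousFunctionalCalculus

variable {A : Type*}

lemma sub_algebraMap_mul_cfc_div_sub [Ring A] [StarRing A] [Algebra ℝ A] [TopologicalSpace A]
    [ContinuousFunctionalCalculus ℝ A IsSelfAdjoint] {a : A} (ha : IsSelfAdjoint a) {x : ℝ}
    (hx : x ∉ spectrum ℝ a) :
    (a - algebraMap ℝ A x) * cfc (fun t => t / (t - x)) a = a := by
  have hne : ∀ t ∈ spectrum ℝ a, t - x ≠ 0 := fun t ht h => hx (sub_eq_zero.mp h ▸ ht)
  have hcont : ContinuousOn (fun t : ℝ => t / (t - x)) (spectrum ℝ a) :=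
    continuousOn_id.div (by fun_prop) hne
  calc (a - algebraMap ℝ A x) * cfc (fun t => t / (t - x)) a
      = cfc (fun t : ℝ => t - x) a * cfc (fun t => t / (t - x)) a := by
        rw [cfc_sub (fun t : ℝ => t) (fun _ => x) a, cfc_id' ℝ a, cfc_const x a]
    _ = cfc (fun t : ℝ => (t - x) * (t / (t - x))) a := (cfc_mul _ _ a (by fun_prop) hcont).symm
    _ = cfc (fun t : ℝ => t) a := cfc_congr fun t ht => mul_div_cancel₀ t (hne t ht)
    _ = a := cfc_id' ℝ a

lemma norm_cfc_div_sub_le [NormedRing A] [StarRing A] [NormedAlgebra ℝ A]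
    [IsometricContinuousFunctionalCalculus ℝ A IsSelfAdjoint] {a : A} {lm lp x : ℝ}
    (hgap : ∀ t ∈ spectrum ℝ a, t ≤ lm ∨ lp ≤ t) (hlm : 0 < lm) (hx₁ : lm < x) (hx₂ : x < lp) :
    ‖cfc (fun t => t / (t - x)) a‖ ≤ max (lm / (x - lm)) (lp / (lp - x)) :=
  norm_cfc_le (le_max_of_le_left (div_nonneg hlm.le (sub_pos.mpr hx₁).le))
    fun t ht => abs_div_sub_le_max hlm hx₁ hx₂ (hgap t ht)

theorem IsSelfAdjoint.notMem_spectrum_mul_one_add [CStarAlgebra A] {a b : A}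
    (ha : IsSelfAdjoint a) {κ lm lp x : ℝ} (hgap : ∀ t ∈ spectrum ℝ a, t ≤ lm ∨ lp ≤ t)
    (hb : ‖b‖ ≤ κ) (hlm : 0 < lm) (hlmp : lm < lp) (hx₁ : (1 + κ) * lm < x)
    (hx₂ : x < (1 - κ) * lp) : x ∉ spectrum ℝ (a * (1 + b)) := by
  have hκ : 0 ≤ κ := (norm_nonneg b).trans hb
  have hxlm : lm < x := by nlinarith
  have hxlp : x < lp := by nlinarith
  have hx : x ∉ spectrum ℝ a := fun hx => by rcases hgap x hx with h | h <;> linarith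
  have hM : max (lm / (x - lm)) (lp / (lp - x)) * κ < 1 := by
    rw [max_mul_of_nonneg _ _ hκ, div_mul_eq_mul_div, div_mul_eq_mul_div]
    exact max_lt ((div_lt_one (by linarith)).mpr (by linarith))
      ((div_lt_one (by linarith)).mpr (by linarith))
  refine spectrum.notMem_mul_one_add hx (sub_algebraMap_mul_cfc_div_sub ha hx) ?_
  calc ‖cfc (fun t => t / (t - x)) a * b‖ ≤ ‖cfc (fun t => t / (t - x)) a‖ * ‖b‖ := norm_mul_le _ _
    _ ≤ max (lm / (x - lm)) (lp / (lp - x)) * κ :=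
        mul_le_mul (norm_cfc_div_sub_le hgap hlm hxlm hxlp) hb (norm_nonneg b)
          (le_max_of_le_left (div_nonneg hlm.le (by linarith)))
    _ < 1 := hM

end ContinuousFunctionalCalculus

lemma spectrum.ofReal_mem_mul_comm_iff {A : Type*} [Ring A] [Algebra ℝ A] [Algebra ℂ A]
    [IsScalarTower ℝ ℂ A] {a b : A} {t : ℝ} (ht : t ≠ 0) :
    (t : ℂ) ∈ spectrum ℂ (a * b) ↔ t ∈ spectrum ℝ (b * a) := by
  rw [← Complex.coe_algebraMap, spectrum.algebraMap_mem_iff]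
  simpa [ht] using congrArg (t ∈ ·) (spectrum.nonzero_mul_comm a b)

theorem stmt_5_general {E : Type*} [NormedAddCommGroup E] [InnerProductSpace ℂ E] [CompleteSpace E]
    (J G Ghalf Δ : E →L[ℂ] E)
    (hJsa : IsSelfAdjoint J)
    (hGhsa : IsSelfAdjoint Ghalf) (hGhsq : Ghalf * Ghalf = G)
    (κ : ℝ) (hΔκ : ‖Δ‖ ≤ κ)
    (G' : E →L[ℂ] E) (hG' : G' = Ghalf * (1 + Δ) * Ghalf)
    (lm lp : ℝ) (hlm : 0 < lm) (hlmp : lm < lp)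
    (hgap : ∀ x : ℝ, lm < x → x < lp → (x : ℂ) ∉ spectrum ℂ (J * G)) :
    ∀ x : ℝ, (1 + κ) * lm < x → x < (1 - κ) * lp → (x : ℂ) ∉ spectrum ℂ (J * G') := by
  intro x hx₁ hx₂
  have hA : IsSelfAdjoint (Ghalf * J * Ghalf) := by
    simpa [hGhsa.star_eq] using hJsa.conjugate Ghalf
  have hgapA : ∀ t ∈ spectrum ℝ (Ghalf * J * Ghalf), t ≤ lm ∨ lp ≤ t := by
    intro t ht
    by_contra! h
    refine hgap t h.1 h.2 ?_
    rwa [← hGhsq, ← mul_assoc, spectrum.ofReal_mem_mul_comm_iff (by linarith), ← mul_assoc]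
  have hx₀ : x ≠ 0 := (show 0 < x by nlinarith [(norm_nonneg Δ).trans hΔκ]).ne'
  rw [hG', show J * (Ghalf * (1 + Δ) * Ghalf) = J * Ghalf * (1 + Δ) * Ghalf by noncomm_ring,
    spectrum.ofReal_mem_mul_comm_iff hx₀]
  simpa only [mul_assoc] using hA.notMem_spectrum_mul_one_add hgapA hΔκ hlm hlmp hx₁ hx₂

/-- spectral gap inclusion, positive gap case:
`(λ⁻, λ⁺) ⊂ ρ(JG)` with `0 < λ⁻ < λ⁺` implies `((1+κ)λ⁻, (1-κ)λ⁺) ⊂ ρ(JG')`. -/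
theorem stmt_5 {E : Type*} [NormedAddCommGroup E] [InnerProductSpace ℂ E] [CompleteSpace E]
    (J G Ghalf Ginvhalf Δ : E →L[ℂ] E)
    (hJsa : IsSelfAdjoint J) (hJinv : J * J = 1)
    (hGsa : IsSelfAdjoint G) (γ : ℝ) (hγ : 0 < γ)
    (hGpos : ∀ ψ : E, γ * ‖ψ‖ ^ 2 ≤ (⟪G ψ, ψ⟫_ℂ).re)
    (hGhsa : IsSelfAdjoint Ghalf) (hGhsq : Ghalf * Ghalf = G)
    (hGhpos : ∀ ψ : E, 0 ≤ (⟪Ghalf ψ, ψ⟫_ℂ).re)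
    (hinv1 : Ghalf * Ginvhalf = 1) (hinv2 : Ginvhalf * Ghalf = 1)
    (hΔsa : IsSelfAdjoint Δ) (κ : ℝ) (hΔκ : ‖Δ‖ ≤ κ) (hκ : κ < 1)
    (G' : E →L[ℂ] E) (hG' : G' = Ghalf * (1 + Δ) * Ghalf)
    (lm lp : ℝ) (hlm : 0 < lm) (hlmp : lm < lp)
    (hgap : ∀ x : ℝ, lm < x → x < lp → (x : ℂ) ∉ spectrum ℂ (J * G)) :
    ∀ x : ℝ, (1 + κ) * lm < x → x < (1 - κ) * lp → (x : ℂ) ∉ spectrum ℂ (J * G') :=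
  stmt_5_general J G Ghalf Δ hJsa hGhsa hGhsq κ hΔκ G' hG' lm lp hlm hlmp hgap
end

section
/- Let G be bounded selfadjoint positive definite, J a hermitian symmetry, κ < 1, and G' = G^{1/2}(I+Δ)G^{1/2} with Δ selfadjoint, ‖Δ‖ ≤ κ. If (λ⁻, λ⁺) ⊂ ρ(JG) with λ⁻ < 0 < λ⁺, then ((1−κ)λ⁻, (1−κ)λ⁺) ⊂ ρ(JG'). -/
open scoped InnerProductSpace

/-!
Conjugation by `G^{1/2}` turns `JG` into the selfadjoint operator `A = G^{1/2} J G^{1/2}` and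
`JG'` into `A(1 + Δ)`. As `σ(A)` misses `(λ⁻, λ⁺) ∋ 0`, `A` is invertible with
`λ⁻⁻¹ ≤ A⁻¹ ≤ λ⁺⁻¹`, so for `x` in the scaled gap
`1 + Δ - x A⁻¹ ≥ 1 - κ - max (x / λ⁺) (x / λ⁻) > 0`; hence `A(1 + Δ) - x = A(1 + Δ - x A⁻¹)`
is invertible.
-/

lemma mul_inv_le_max_div_of_le_or_le {lm lp t : ℝ} (x : ℝ) (hlm : lm < 0) (hlp : 0 < lp)
    (ht : t ≤ lm ∨ lp ≤ t) : x * t⁻¹ ≤ max (x / lp) (x / lm) := by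
  have hinv : lm⁻¹ ≤ t⁻¹ ∧ t⁻¹ ≤ lp⁻¹ := by
    rcases ht with ht | ht
    · exact ⟨(inv_le_inv_of_neg hlm (ht.trans_lt hlm)).2 ht,
        (inv_lt_zero.2 (ht.trans_lt hlm)).le.trans (inv_pos.2 hlp).le⟩
    · exact ⟨(inv_lt_zero.2 hlm).le.trans (inv_pos.2 (hlp.trans_le ht)).le, inv_anti₀ hlp ht⟩
  rcases le_total 0 x with hx | hx
  · exact le_max_of_le_left (by simpa [div_eq_mul_inv] using mul_le_mul_of_nonneg_left hinv.2 hx)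
  · exact le_max_of_le_right (by simpa [div_eq_mul_inv] using mul_le_mul_of_nonpos_left hinv.1 hx)

section CStarAlgebra

variable {A : Type*} [CStarAlgebra A] [PartialOrder A] [StarOrderedRing A]

lemma smul_inv_le_algebraMap_of_spectrum_gap {u : Aˣ} (hu : IsSelfAdjoint (u : A))
    {lm lp : ℝ} (hlm : lm < 0) (hlp : 0 < lp)
    (hgap : ∀ t ∈ spectrum ℝ (u : A), t ≤ lm ∨ lp ≤ t) (x : ℝ) :
    x • (↑u⁻¹ : A) ≤ algebraMap ℝ A (max (x / lp) (x / lm)) := by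
  have hcont : ContinuousOn (·⁻¹) (spectrum ℝ (u : A)) :=
    continuousOn_inv₀.mono fun _ ht => spectrum.ne_zero_of_mem_of_unit ht
  rw [← cfc_inv_id (R := ℝ) u, ← cfc_const_mul x _ _ hcont]
  exact cfc_le_algebraMap _ _ _ fun t ht => mul_inv_le_max_div_of_le_or_le x hlm hlp (hgap t ht)

lemma IsSelfAdjoint.algebraMap_one_sub_le_one_add {d : A} (hd : IsSelfAdjoint d) {κ : ℝ}
    (hκ : ‖d‖ ≤ κ) :
    algebraMap ℝ A (1 - κ) ≤ 1 + d := by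
  calc algebraMap ℝ A (1 - κ) ≤ 1 - algebraMap ℝ A ‖d‖ := by
        rw [map_sub, map_one]; gcongr
    _ ≤ 1 + d := by
        rw [sub_eq_add_neg]; gcongr; exact hd.neg_algebraMap_norm_le_self

theorem notMem_spectrum_mul_one_add_of_spectrum_gap {a d : A} (ha : IsSelfAdjoint a)
    (hd : IsSelfAdjoint d) {κ lm lp x : ℝ} (hκ : ‖d‖ ≤ κ) (hlm : lm < 0) (hlp : 0 < lp)
    (hgap : ∀ t ∈ spectrum ℝ a, t ≤ lm ∨ lp ≤ t)
    (hx₁ : (1 - κ) * lm < x) (hx₂ : x < (1 - κ) * lp) :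
    x ∉ spectrum ℝ (a * (1 + d)) := by
  have ha₀ : IsUnit a := by
    rw [← spectrum.zero_notMem_iff ℝ]
    intro h
    rcases hgap 0 h with h | h <;> linarith
  lift a to Aˣ using ha₀
  set c := max (x / lp) (x / lm)
  have hc : c < 1 - κ := max_lt ((div_lt_iff₀ hlp).2 hx₂) ((div_lt_iff_of_neg hlm).2 hx₁)
  have hpos : algebraMap ℝ A (1 - κ - c) ≤ 1 + d - x • (↑a⁻¹ : A) := by
    rw [map_sub]
    exact sub_le_sub (hd.algebraMap_one_sub_le_one_add hκ)
      (smul_inv_le_algebraMap_of_spectrum_gap ha hlm hlp hgap x)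
  have hunit : IsUnit (1 + d - x • (↑a⁻¹ : A)) :=
    CStarAlgebra.isUnit_of_le _ hpos (isStrictlyPositive_algebraMap (by linarith))
  have hfactor : algebraMap ℝ A x - a * (1 + d) = -(a * (1 + d - x • (↑a⁻¹ : A))) := by
    rw [mul_sub, mul_smul_comm, Units.mul_inv, Algebra.algebraMap_eq_smul_one, neg_sub]
  rw [spectrum.notMem_iff, hfactor, IsUnit.neg_iff]
  exact a.isUnit.mul hunit

end CStarAlgebra

theorem stmt_6_general {E : Type*} [NormedAddCommGroup E] [InnerProductSpace ℂ E] [CompleteSpace E]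
    (J G Ghalf Ginvhalf Δ : E →L[ℂ] E)
    (hJsa : IsSelfAdjoint J)
    (hGhsa : IsSelfAdjoint Ghalf) (hGhsq : Ghalf * Ghalf = G)
    (hinv1 : Ghalf * Ginvhalf = 1) (hinv2 : Ginvhalf * Ghalf = 1)
    (hΔsa : IsSelfAdjoint Δ) (κ : ℝ) (hΔκ : ‖Δ‖ ≤ κ)
    (G' : E →L[ℂ] E) (hG' : G' = Ghalf * (1 + Δ) * Ghalf)
    (lm lp : ℝ) (hlm : lm < 0) (hlp : 0 < lp)
    (hgap : ∀ x : ℝ, lm < x → x < lp → (x : ℂ) ∉ spectrum ℂ (J * G)) :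
    ∀ x : ℝ, (1 - κ) * lm < x → x < (1 - κ) * lp → (x : ℂ) ∉ spectrum ℂ (J * G') := by
  intro x hx₁ hx₂
  let u : (E →L[ℂ] E)ˣ := ⟨Ghalf, Ginvhalf, hinv1, hinv2⟩
  set A := Ghalf * J * Ghalf
  have hA : IsSelfAdjoint A := by
    simpa only [hGhsa.star_eq] using hJsa.conjugate Ghalf
  have hJG : J * G = ↑u⁻¹ * A * ↑u := by
    simp only [u, A, Units.inv_mk, ← hGhsq, ← mul_assoc, hinv2, one_mul]
  have hJG' : J * G' = ↑u⁻¹ * (A * (1 + Δ)) * ↑u := by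
    simp only [u, A, Units.inv_mk, hG', ← mul_assoc, hinv2, one_mul]
  have hgapA : ∀ t ∈ spectrum ℝ A, t ≤ lm ∨ lp ≤ t := by
    intro t ht
    by_contra! h
    refine hgap t h.1 h.2 ?_
    rw [hJG, spectrum.units_conjugate']
    exact spectrum.algebraMap_mem ℂ ht
  rw [hJG', spectrum.units_conjugate']
  exact fun h => notMem_spectrum_mul_one_add_of_spectrum_gap hA hΔsa hΔκ hlm hlp hgapA hx₁ hx₂
    (spectrum.of_algebraMap_mem ℂ h)

/-- spectral gap inclusion, central gap case:
`(λ⁻, λ⁺) ⊂ ρ(JG)` with `λ⁻ < 0 < λ⁺` implies `((1-κ)λ⁻, (1-κ)λ⁺) ⊂ ρ(JG')`. -/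
theorem stmt_6 {E : Type*} [NormedAddCommGroup E] [InnerProductSpace ℂ E] [CompleteSpace E]
    (J G Ghalf Ginvhalf Δ : E →L[ℂ] E)
    (hJsa : IsSelfAdjoint J) (hJinv : J * J = 1)
    (hGsa : IsSelfAdjoint G) (γ : ℝ) (hγ : 0 < γ)
    (hGpos : ∀ ψ : E, γ * ‖ψ‖ ^ 2 ≤ (⟪G ψ, ψ⟫_ℂ).re)
    (hGhsa : IsSelfAdjoint Ghalf) (hGhsq : Ghalf * Ghalf = G)
    (hGhpos : ∀ ψ : E, 0 ≤ (⟪Ghalf ψ, ψ⟫_ℂ).re)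
    (hinv1 : Ghalf * Ginvhalf = 1) (hinv2 : Ginvhalf * Ghalf = 1)
    (hΔsa : IsSelfAdjoint Δ) (κ : ℝ) (hΔκ : ‖Δ‖ ≤ κ) (hκ : κ < 1)
    (G' : E →L[ℂ] E) (hG' : G' = Ghalf * (1 + Δ) * Ghalf)
    (lm lp : ℝ) (hlm : lm < 0) (hlp : 0 < lp)
    (hgap : ∀ x : ℝ, lm < x → x < lp → (x : ℂ) ∉ spectrum ℂ (J * G)) :
    ∀ x : ℝ, (1 - κ) * lm < x → x < (1 - κ) * lp → (x : ℂ) ∉ spectrum ℂ (J * G') :=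
  stmt_6_general J G Ghalf Ginvhalf Δ hJsa hGhsa hGhsq hinv1 hinv2 hΔsa κ hΔκ G' hG' lm lp hlm hlp
    hgap
end

section
/- Let J = J* = J⁻¹ and G, G' bounded selfadjoint positive definite operators with the same γ-bounds, satisfying (1−κ)(Gψ,ψ) ≤ (G'ψ,ψ) ≤ (1+κ)(Gψ,ψ) for all ψ, κ < 1. For k ≥ 1 let λₖ⁺ = inf over k-dimensional subspaces T of {ψ : (Jψ,ψ) > 0} of sup over nonzero φ ∈ T of ‖G^{1/2}φ‖²/(Jφ,φ), and λₖ'⁺ the analogous quantity for G'. Then |λₖ'⁺ − λₖ⁺| ≤ κ λₖ⁺ for all k. -/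
/-! Because `Ghalf` is a selfadjoint square root of `G`, `‖Ghalf φ‖² = (Gφ, φ)`, so the hypotheses
say that the Rayleigh quotients of `G'` and `G` satisfy `(1 - κ) R ≤ R' ≤ (1 + κ) R` pointwise.
Multiplication by a nonnegative constant commutes with both the supremum over `φ` and the
infimum over `T`, so the same two-sided bound passes to `λₖ'⁺` and `λₖ⁺`; `κ ≥ 0` because `G > 0`. -/

open scoped InnerProductSpace

/-- The variational quantity `λₖ⁺`: infimum over `k`-dimensional subspaces `T` of the
`J`-positive cone of the supremum over nonzero `φ ∈ T` of `‖G^{1/2}φ‖²/(Jφ,φ)`. -/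
noncomputable def lamPlus {E : Type*} [NormedAddCommGroup E] [InnerProductSpace ℂ E]
    (J Ghalf : E →L[ℂ] E) (k : ℕ) : ℝ :=
  ⨅ T : {T : Submodule ℂ E // Module.finrank ℂ T = k ∧
      ∀ ψ ∈ T, ψ ≠ 0 → 0 < (⟪J ψ, ψ⟫_ℂ).re},
    ⨆ φ : {φ : E // φ ∈ (T : Submodule ℂ E) ∧ φ ≠ 0},
      ‖Ghalf (φ : E)‖ ^ 2 / (⟪J (φ : E), (φ : E)⟫_ℂ).re

open Set

section RealIndexed

variable {ι : Type*} {f g : ι → ℝ} {c d : ℝ}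

theorem bddAbove_range_iff_of_mul_le_of_le_mul (hd : 0 < d) (hc : 0 ≤ c)
    (hdg : ∀ i, d * f i ≤ g i) (hgc : ∀ i, g i ≤ c * f i) :
    BddAbove (range g) ↔ BddAbove (range f) :=
  ⟨fun hg => BddAbove.range_mono (fun i => d⁻¹ * g i)
      (fun i => (le_inv_mul_iff₀ hd).2 (hdg i))
      (hg.range_comp_left (monotone_mul_left_of_nonneg (inv_nonneg.2 hd.le))),
    fun hf => BddAbove.range_mono _ hgc (hf.range_comp_left (monotone_mul_left_of_nonneg hc))⟩

/- In `ℝ` an unbounded supremum is `0`; the two-sided comparison makes `f` and `g`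
unbounded together, so the junk values agree. -/
theorem Real.iSup_le_mul_iSup (hd : 0 < d) (hc : 0 ≤ c)
    (hdg : ∀ i, d * f i ≤ g i) (hgc : ∀ i, g i ≤ c * f i) :
    ⨆ i, g i ≤ c * ⨆ i, f i := by
  by_cases hf : BddAbove (range f)
  · rw [Real.mul_iSup_of_nonneg hc]
    exact ciSup_mono (hf.range_comp_left (monotone_mul_left_of_nonneg hc)) hgc
  · have hg := (bddAbove_range_iff_of_mul_le_of_le_mul hd hc hdg hgc).not.2 hf
    rw [Real.iSup_of_not_bddAbove hf, Real.iSup_of_not_bddAbove hg, mul_zero]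

theorem Real.mul_iSup_le_iSup (hd : 0 < d) (hc : 0 ≤ c)
    (hdg : ∀ i, d * f i ≤ g i) (hgc : ∀ i, g i ≤ c * f i) :
    d * ⨆ i, f i ≤ ⨆ i, g i := by
  by_cases hf : BddAbove (range f)
  · rw [Real.mul_iSup_of_nonneg hd.le]
    exact ciSup_mono ((bddAbove_range_iff_of_mul_le_of_le_mul hd hc hdg hgc).2 hf) hdg
  · have hg := (bddAbove_range_iff_of_mul_le_of_le_mul hd hc hdg hgc).not.2 hf
    rw [Real.iSup_of_not_bddAbove hf, Real.iSup_of_not_bddAbove hg, mul_zero]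

theorem Real.iInf_le_mul_iInf (hc : 0 ≤ c) (hg : ∀ i, 0 ≤ g i) (hgc : ∀ i, g i ≤ c * f i) :
    ⨅ i, g i ≤ c * ⨅ i, f i := by
  rw [Real.mul_iInf_of_nonneg hc]
  exact ciInf_mono ⟨0, forall_mem_range.2 hg⟩ hgc

theorem Real.mul_iInf_le_iInf (hd : 0 ≤ d) (hf : ∀ i, 0 ≤ f i) (hdg : ∀ i, d * f i ≤ g i) :
    d * ⨅ i, f i ≤ ⨅ i, g i := by
  rw [Real.mul_iInf_of_nonneg hd]
  exact ciInf_mono ⟨0, forall_mem_range.2 fun i => mul_nonneg hd (hf i)⟩ hdg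

end RealIndexed

theorem IsSelfAdjoint.norm_apply_sq {𝕜 E : Type*} [RCLike 𝕜] [NormedAddCommGroup E]
    [InnerProductSpace 𝕜 E] [CompleteSpace E] {A : E →L[𝕜] E} (hA : IsSelfAdjoint A) (x : E) :
    ‖A x‖ ^ 2 = RCLike.re ⟪(A * A) x, x⟫_𝕜 := by
  simpa [hA.adjoint_eq] using A.apply_norm_sq_eq_inner_adjoint_left x

section lamPlus

variable {E : Type*} [NormedAddCommGroup E] [InnerProductSpace ℂ E]

theorem lamPlus_eq_zero_of_subsingleton [Subsingleton E] (J A : E →L[ℂ] E) {k : ℕ} (hk : k ≠ 0) :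
    lamPlus J A k = 0 := by
  have : IsEmpty {T : Submodule ℂ E // Module.finrank ℂ T = k ∧
      ∀ ψ ∈ T, ψ ≠ 0 → 0 < (⟪J ψ, ψ⟫_ℂ).re} :=
    ⟨fun T => hk (T.2.1 ▸ Module.finrank_zero_of_subsingleton)⟩
  exact Real.iInf_of_isEmpty _

variable {J A B : E →L[ℂ] E} {c d : ℝ}

theorem lamPlus_le_mul_lamPlus (hd : 0 < d) (hc : 0 ≤ c)
    (hdAB : ∀ φ, d * ‖A φ‖ ^ 2 ≤ ‖B φ‖ ^ 2) (hBAc : ∀ φ, ‖B φ‖ ^ 2 ≤ c * ‖A φ‖ ^ 2) (k : ℕ) :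
    lamPlus J B k ≤ c * lamPlus J A k := by
  refine Real.iInf_le_mul_iInf hc
    (fun T => Real.iSup_nonneg fun φ => div_nonneg (sq_nonneg _) (T.2.2 _ φ.2.1 φ.2.2).le)
    fun T => Real.iSup_le_mul_iSup hd hc (fun φ => ?_) fun φ => ?_
  all_goals
    rw [mul_div_assoc']
    exact div_le_div_of_nonneg_right (by apply_assumption) (T.2.2 _ φ.2.1 φ.2.2).le

theorem mul_lamPlus_le_lamPlus (hd : 0 < d) (hc : 0 ≤ c)
    (hdAB : ∀ φ, d * ‖A φ‖ ^ 2 ≤ ‖B φ‖ ^ 2) (hBAc : ∀ φ, ‖B φ‖ ^ 2 ≤ c * ‖A φ‖ ^ 2) (k : ℕ) :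
    d * lamPlus J A k ≤ lamPlus J B k := by
  refine Real.mul_iInf_le_iInf hd.le
    (fun T => Real.iSup_nonneg fun φ => div_nonneg (sq_nonneg _) (T.2.2 _ φ.2.1 φ.2.2).le)
    fun T => Real.mul_iSup_le_iSup hd hc (fun φ => ?_) fun φ => ?_
  all_goals
    rw [mul_div_assoc']
    exact div_le_div_of_nonneg_right (by apply_assumption) (T.2.2 _ φ.2.1 φ.2.2).le

end lamPlus

theorem stmt_10_general {E : Type*} [NormedAddCommGroup E] [InnerProductSpace ℂ E] [CompleteSpace E]
    (J G G' Ghalf G'half : E →L[ℂ] E)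
    (γ : ℝ) (hγ : 0 < γ)
    (hGpos : ∀ ψ : E, γ * ‖ψ‖ ^ 2 ≤ (⟪G ψ, ψ⟫_ℂ).re)
    (hGhsa : IsSelfAdjoint Ghalf) (hGhsq : Ghalf * Ghalf = G)
    (hG'hsa : IsSelfAdjoint G'half) (hG'hsq : G'half * G'half = G')
    (κ : ℝ) (hκ : κ < 1)
    (hlow : ∀ ψ : E, (1 - κ) * (⟪G ψ, ψ⟫_ℂ).re ≤ (⟪G' ψ, ψ⟫_ℂ).re)
    (hhigh : ∀ ψ : E, (⟪G' ψ, ψ⟫_ℂ).re ≤ (1 + κ) * (⟪G ψ, ψ⟫_ℂ).re) :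
    ∀ k : ℕ, 1 ≤ k → |lamPlus J G'half k - lamPlus J Ghalf k| ≤ κ * lamPlus J Ghalf k := by
  intro k hk
  rcases subsingleton_or_nontrivial E with hE | hE
  · simp [lamPlus_eq_zero_of_subsingleton _ _ (Nat.one_le_iff_ne_zero.1 hk)]
  have hκ0 : 0 ≤ κ := by
    obtain ⟨ψ, hψ⟩ := exists_ne (0 : E)
    have hGψ : 0 < (⟪G ψ, ψ⟫_ℂ).re := (by positivity : 0 < γ * ‖ψ‖ ^ 2).trans_le (hGpos ψ)
    linarith [le_of_mul_le_mul_right ((hlow ψ).trans (hhigh ψ)) hGψ]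
  have hnorm : ∀ φ, ‖Ghalf φ‖ ^ 2 = (⟪G φ, φ⟫_ℂ).re ∧ ‖G'half φ‖ ^ 2 = (⟪G' φ, φ⟫_ℂ).re :=
    fun φ => ⟨hGhsq ▸ hGhsa.norm_apply_sq φ, hG'hsq ▸ hG'hsa.norm_apply_sq φ⟩
  have hlow' : ∀ φ, (1 - κ) * ‖Ghalf φ‖ ^ 2 ≤ ‖G'half φ‖ ^ 2 := fun φ => by
    simpa only [hnorm] using hlow φ
  have hhigh' : ∀ φ, ‖G'half φ‖ ^ 2 ≤ (1 + κ) * ‖Ghalf φ‖ ^ 2 := fun φ => by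
    simpa only [hnorm] using hhigh φ
  have hle := lamPlus_le_mul_lamPlus (J := J) (sub_pos.2 hκ) (by linarith) hlow' hhigh' k
  have hge := mul_lamPlus_le_lamPlus (J := J) (sub_pos.2 hκ) (by linarith) hlow' hhigh' k
  exact abs_sub_le_iff.2 ⟨by linarith, by linarith⟩

/-- if `(1-κ)(Gψ,ψ) ≤ (G'ψ,ψ) ≤ (1+κ)(Gψ,ψ)` with `κ < 1`, then the
variational eigenvalues satisfy `|λₖ'⁺ - λₖ⁺| ≤ κ λₖ⁺` for all `k ≥ 1`. -/
theorem stmt_10 {E : Type*} [NormedAddCommGroup E] [InnerProductSpace ℂ E] [CompleteSpace E]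
    (J G G' Ghalf G'half : E →L[ℂ] E)
    (hJsa : IsSelfAdjoint J) (hJinv : J * J = 1)
    (hGsa : IsSelfAdjoint G) (hG'sa : IsSelfAdjoint G') (γ : ℝ) (hγ : 0 < γ)
    (hGpos : ∀ ψ : E, γ * ‖ψ‖ ^ 2 ≤ (⟪G ψ, ψ⟫_ℂ).re)
    (hG'pos : ∀ ψ : E, γ * ‖ψ‖ ^ 2 ≤ (⟪G' ψ, ψ⟫_ℂ).re)
    (hGhsa : IsSelfAdjoint Ghalf) (hGhsq : Ghalf * Ghalf = G)
    (hG'hsa : IsSelfAdjoint G'half) (hG'hsq : G'half * G'half = G')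
    (κ : ℝ) (hκ : κ < 1)
    (hlow : ∀ ψ : E, (1 - κ) * (⟪G ψ, ψ⟫_ℂ).re ≤ (⟪G' ψ, ψ⟫_ℂ).re)
    (hhigh : ∀ ψ : E, (⟪G' ψ, ψ⟫_ℂ).re ≤ (1 + κ) * (⟪G ψ, ψ⟫_ℂ).re) :
    ∀ k : ℕ, 1 ≤ k → |lamPlus J G'half k - lamPlus J Ghalf k| ≤ κ * lamPlus J Ghalf k :=
  stmt_10_general J G G' Ghalf G'half γ hγ hGpos hGhsa hGhsq hG'hsa hG'hsq κ hκ hlow hhigh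
end

section
/- Let A be a bounded operator with ‖A‖ ≤ b < 1. Then the block operator 𝐀 = [[I, A*],[A, I]] on X ⊕ X admits the factorization 𝐀 = R* R where R = [[(I − A*A)^{1/2}, 0],[A, I]] (block Cholesky factorization), and R is boundedly invertible with inverse L = [[(I−A*A)^{-1/2}, 0],[−A(I−A*A)^{-1/2}, I]]. -/
open scoped InnerProductSpace

/-- The block operator `[[P, Q],[R, S]]` on `X ⊕ X` (with the Hilbert space `ℓ²`-sum). -/
noncomputable def blockOp {E : Type*} [NormedAddCommGroup E] [InnerProductSpace ℂ E]
    (P Q R S : E →L[ℂ] E) : WithLp 2 (E × E) →L[ℂ] WithLp 2 (E × E) :=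
  ((WithLp.prodContinuousLinearEquiv 2 ℂ E E).symm.toContinuousLinearMap).comp
    ((((P.comp (ContinuousLinearMap.fst ℂ E E) + Q.comp (ContinuousLinearMap.snd ℂ E E)).prod
      (R.comp (ContinuousLinearMap.fst ℂ E E) + S.comp (ContinuousLinearMap.snd ℂ E E)))).comp
      (WithLp.prodContinuousLinearEquiv 2 ℂ E E).toContinuousLinearMap)

@[ext]
lemma ContinuousLinearMap.ext_withLp_prod {𝕜 E F : Type*} [RCLike 𝕜]
    [NormedAddCommGroup E] [NormedSpace 𝕜 E] [NormedAddCommGroup F] [NormedSpace 𝕜 F]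
    {f g : WithLp 2 (E × F) →L[𝕜] WithLp 2 (E × F)}
    (hfst : ∀ x, (f x).fst = (g x).fst) (hsnd : ∀ x, (f x).snd = (g x).snd) : f = g := by
  ext x : 1
  exact WithLp.ofLp_injective 2 (Prod.ext (hfst x) (hsnd x))

namespace blockOp

open ContinuousLinearMap

variable {E : Type*} [NormedAddCommGroup E] [InnerProductSpace ℂ E]

@[simp]
lemma apply_fst (P Q R S : E →L[ℂ] E) (x : WithLp 2 (E × E)) :
    (blockOp P Q R S x).fst = P x.fst + Q x.snd := rfl

@[simp]
lemma apply_snd (P Q R S : E →L[ℂ] E) (x : WithLp 2 (E × E)) :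
    (blockOp P Q R S x).snd = R x.fst + S x.snd := rfl

lemma one_eq : blockOp (1 : E →L[ℂ] E) 0 0 1 = 1 := by
  ext x <;> simp

lemma mul_eq (P Q R S P' Q' R' S' : E →L[ℂ] E) :
    blockOp P Q R S * blockOp P' Q' R' S' =
      blockOp (P * P' + Q * R') (P * Q' + Q * S') (R * P' + S * R') (R * Q' + S * S') := by
  ext x <;> simp only [mul_apply_eq_comp, apply_fst, apply_snd, add_apply, map_add] <;> abel

lemma adjoint_eq [CompleteSpace E] (P Q R S : E →L[ℂ] E) :
    adjoint (blockOp P Q R S) = blockOp (adjoint P) (adjoint R) (adjoint Q) (adjoint S) := by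
  refine ((eq_adjoint_iff _ _).mpr fun x y => ?_).symm
  simp only [WithLp.prod_inner_apply, WithLp.ofLp_fst, WithLp.ofLp_snd, apply_fst, apply_snd, inner_add_left, inner_add_right,
    adjoint_inner_left]
  ring

lemma adjoint_lowerTriangular_mul_self [CompleteSpace E] {A T : E →L[ℂ] E}
    (hT : IsSelfAdjoint T) (hTsq : T * T = 1 - adjoint A * A) :
    adjoint (blockOp T 0 A 1) * blockOp T 0 A 1 = blockOp 1 (adjoint A) A 1 := by
  rw [adjoint_eq, hT.adjoint_eq, map_zero, adjoint_one, mul_eq]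
  congr 1 <;> simp [hTsq]

lemma lowerTriangular_mul_inverse {A T Tinv : E →L[ℂ] E} (h : T * Tinv = 1) :
    blockOp T 0 A 1 * blockOp Tinv 0 (-(A * Tinv)) 1 = 1 := by
  rw [mul_eq, ← one_eq]
  congr 1 <;> simp [h]

lemma inverse_mul_lowerTriangular {A T Tinv : E →L[ℂ] E} (h : Tinv * T = 1) :
    blockOp Tinv 0 (-(A * Tinv)) 1 * blockOp T 0 A 1 = 1 := by
  rw [mul_eq, ← one_eq]
  congr 1 <;> simp [mul_assoc, h]

end blockOp

theorem stmt_12_general {E : Type*} [NormedAddCommGroup E] [InnerProductSpace ℂ E] [CompleteSpace E]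
    (A T Tinv : E →L[ℂ] E)
    (hTsa : IsSelfAdjoint T)
    (hTsq : T * T = 1 - ContinuousLinearMap.adjoint A * A)
    (hTi1 : T * Tinv = 1) (hTi2 : Tinv * T = 1) :
    blockOp 1 (ContinuousLinearMap.adjoint A) A 1 =
      ContinuousLinearMap.adjoint (blockOp T 0 A 1) * blockOp T 0 A 1 ∧
    blockOp T 0 A 1 * blockOp Tinv 0 (-(A * Tinv)) 1 = 1 ∧
    blockOp Tinv 0 (-(A * Tinv)) 1 * blockOp T 0 A 1 = 1 :=
  ⟨(blockOp.adjoint_lowerTriangular_mul_self hTsa hTsq).symm,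
    blockOp.lowerTriangular_mul_inverse hTi1, blockOp.inverse_mul_lowerTriangular hTi2⟩

/-- block Cholesky factorization `𝐀 = R* R` with
`R = [[(I-A*A)^{1/2}, 0],[A, I]]`, whose inverse is
`L = [[(I-A*A)^{-1/2}, 0],[-A(I-A*A)^{-1/2}, I]]`. Here `T = (I-A*A)^{1/2}` and
`Tinv = (I-A*A)^{-1/2}` are characterized by the stated hypotheses. -/
theorem stmt_12 {E : Type*} [NormedAddCommGroup E] [InnerProductSpace ℂ E] [CompleteSpace E]
    (A T Tinv : E →L[ℂ] E) (b : ℝ) (hA : ‖A‖ ≤ b) (hb : b < 1)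
    (hTsa : IsSelfAdjoint T) (hTpos : ∀ ψ : E, 0 ≤ (⟪T ψ, ψ⟫_ℂ).re)
    (hTsq : T * T = 1 - ContinuousLinearMap.adjoint A * A)
    (hTi1 : T * Tinv = 1) (hTi2 : Tinv * T = 1) :
    blockOp 1 (ContinuousLinearMap.adjoint A) A 1 =
      ContinuousLinearMap.adjoint (blockOp T 0 A 1) * blockOp T 0 A 1 ∧
    blockOp T 0 A 1 * blockOp Tinv 0 (-(A * Tinv)) 1 = 1 ∧
    blockOp Tinv 0 (-(A * Tinv)) 1 * blockOp T 0 A 1 = 1 :=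
  stmt_12_general A T Tinv hTsa hTsq hTi1 hTi2
end

section
/- Let B be a bounded operator on a Hilbert space X and a ≥ 0. Consider 𝐓ₐ = [[aI, B*],[B, 0]] on X ⊕ X. Then ‖𝐓ₐ‖ ≤ (a + √(a² + 4‖B‖²))/2. -/
/-!
The norm of a block operator is at most the norm of the real `2 × 2` matrix of the norms of its
blocks. For `𝐓ₐ` that matrix is `[[a, ‖B‖], [‖B‖, 0]]`, whose largest eigenvalue is
`μ = (a + √(a² + 4‖B‖²))/2`, the positive root of `μ² = aμ + ‖B‖²`; the bound
`(au + bv)² + (bu)² ≤ μ²(u² + v²)` then comes from the identity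
`μ (μ²(u² + v²) - (au + bv)² - (bu)²) = a (bu - μv)²`.
-/

open scoped InnerProductSpace

theorem ContinuousLinearMap.norm_apply_add_apply_le {𝕜 E F : Type*} [NontriviallyNormedField 𝕜]
    [SeminormedAddCommGroup E] [SeminormedAddCommGroup F] [NormedSpace 𝕜 E] [NormedSpace 𝕜 F]
    {P Q : E →L[𝕜] F} {p q : ℝ} (hP : ‖P‖ ≤ p) (hQ : ‖Q‖ ≤ q) (x y : E) :
    ‖P x + Q y‖ ≤ p * ‖x‖ + q * ‖y‖ :=
  calc ‖P x + Q y‖ ≤ ‖P‖ * ‖x‖ + ‖Q‖ * ‖y‖ :=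
        norm_add_le_of_le (P.le_opNorm x) (Q.le_opNorm y)
    _ ≤ p * ‖x‖ + q * ‖y‖ := by gcongr

section BlockOperator

variable {E : Type*} [NormedAddCommGroup E] [InnerProductSpace ℂ E]

@[simp]
theorem blockOp_apply_fst (P Q R S : E →L[ℂ] E) (x : WithLp 2 (E × E)) :
    (blockOp P Q R S x).fst = P x.fst + Q x.snd :=
  rfl

@[simp]
theorem blockOp_apply_snd (P Q R S : E →L[ℂ] E) (x : WithLp 2 (E × E)) :
    (blockOp P Q R S x).snd = R x.fst + S x.snd :=
  rfl

theorem norm_blockOp_le {P Q R S : E →L[ℂ] E} {p q r s μ : ℝ} (hP : ‖P‖ ≤ p) (hQ : ‖Q‖ ≤ q)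
    (hR : ‖R‖ ≤ r) (hS : ‖S‖ ≤ s) (hμ : 0 ≤ μ)
    (h : ∀ u v : ℝ, 0 ≤ u → 0 ≤ v →
      (p * u + q * v) ^ 2 + (r * u + s * v) ^ 2 ≤ μ ^ 2 * (u ^ 2 + v ^ 2)) :
    ‖blockOp P Q R S‖ ≤ μ := by
  refine ContinuousLinearMap.opNorm_le_bound _ hμ fun x => ?_
  have hfst := ContinuousLinearMap.norm_apply_add_apply_le hP hQ x.fst x.snd
  have hsnd := ContinuousLinearMap.norm_apply_add_apply_le hR hS x.fst x.snd
  have hsq : ‖blockOp P Q R S x‖ ^ 2 ≤ (μ * ‖x‖) ^ 2 :=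
    calc ‖blockOp P Q R S x‖ ^ 2
        = ‖P x.fst + Q x.snd‖ ^ 2 + ‖R x.fst + S x.snd‖ ^ 2 := by
          rw [WithLp.prod_norm_sq_eq_of_L2, blockOp_apply_fst, blockOp_apply_snd]
      _ ≤ (p * ‖x.fst‖ + q * ‖x.snd‖) ^ 2 + (r * ‖x.fst‖ + s * ‖x.snd‖) ^ 2 := by
          gcongr
      _ ≤ μ ^ 2 * (‖x.fst‖ ^ 2 + ‖x.snd‖ ^ 2) := h _ _ (norm_nonneg _) (norm_nonneg _)
      _ = (μ * ‖x‖) ^ 2 := by rw [mul_pow, WithLp.prod_norm_sq_eq_of_L2]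
  exact (pow_le_pow_iff_left₀ (norm_nonneg _) (by positivity) two_ne_zero).mp hsq

end BlockOperator

theorem le_add_sqrt_sq_add_four_mul_sq_div_two (a b : ℝ) :
    a ≤ (a + √(a ^ 2 + 4 * b ^ 2)) / 2 := by
  have : a ≤ √(a ^ 2 + 4 * b ^ 2) :=
    (le_abs_self a).trans (Real.abs_le_sqrt (by nlinarith))
  linarith

theorem add_sqrt_sq_add_four_mul_sq_div_two_sq (a b : ℝ) :
    ((a + √(a ^ 2 + 4 * b ^ 2)) / 2) ^ 2 = a * ((a + √(a ^ 2 + 4 * b ^ 2)) / 2) + b ^ 2 := by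
  have := Real.sq_sqrt (show 0 ≤ a ^ 2 + 4 * b ^ 2 by positivity)
  linear_combination this / 4

theorem sq_add_sq_le_of_sq_eq {a b μ : ℝ} (ha : 0 ≤ a) (hμa : a ≤ μ)
    (hμ : μ ^ 2 = a * μ + b ^ 2) (u v : ℝ) :
    (a * u + b * v) ^ 2 + (b * u) ^ 2 ≤ μ ^ 2 * (u ^ 2 + v ^ 2) := by
  rcases (ha.trans hμa).eq_or_lt with hμ0 | hμ0
  · have ha0 : a = 0 := le_antisymm (hμa.trans hμ0.symm.le) ha
    have hb0 : b = 0 := by subst ha0; nlinarith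
    simp [ha0, hb0, ← hμ0]
  · have key : μ * (μ ^ 2 * (u ^ 2 + v ^ 2) - ((a * u + b * v) ^ 2 + (b * u) ^ 2)) =
        a * (b * u - μ * v) ^ 2 := by
      linear_combination ((μ + a) * u ^ 2 + μ * v ^ 2) * hμ
    have : 0 ≤ μ ^ 2 * (u ^ 2 + v ^ 2) - ((a * u + b * v) ^ 2 + (b * u) ^ 2) :=
      nonneg_of_mul_nonneg_right (key ▸ by positivity) hμ0
    linarith

/-- the block operator `𝐓ₐ = [[aI, B*],[B, 0]]` satisfies
`‖𝐓ₐ‖ ≤ (a + √(a² + 4‖B‖²))/2`. -/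
theorem stmt_13 {E : Type*} [NormedAddCommGroup E] [InnerProductSpace ℂ E] [CompleteSpace E]
    (B : E →L[ℂ] E) (a : ℝ) (ha : 0 ≤ a) :
    ‖blockOp ((a : ℂ) • (1 : E →L[ℂ] E)) (ContinuousLinearMap.adjoint B) B 0‖ ≤
      (a + Real.sqrt (a ^ 2 + 4 * ‖B‖ ^ 2)) / 2 := by
  have hμa := le_add_sqrt_sq_add_four_mul_sq_div_two a ‖B‖
  have hP : ‖(a : ℂ) • (1 : E →L[ℂ] E)‖ ≤ a :=
    calc ‖(a : ℂ) • (1 : E →L[ℂ] E)‖ ≤ ‖(a : ℂ)‖ * ‖(1 : E →L[ℂ] E)‖ :=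
          norm_smul_le _ _
      _ ≤ a * 1 := by
        rw [Complex.norm_of_nonneg ha]
        exact mul_le_mul_of_nonneg_left ContinuousLinearMap.norm_id_le ha
      _ = a := mul_one a
  refine norm_blockOp_le hP (ContinuousLinearMap.adjoint.norm_map B).le le_rfl norm_zero.le
    (ha.trans hμa) fun u v _ _ => ?_
  simpa using sq_add_sq_le_of_sq_eq ha hμa (add_sqrt_sq_add_four_mul_sq_div_two_sq a ‖B‖) u v
end

section
/- Let A, δA be bounded with ‖A‖ ≤ b < 1 and suppose δA*A + A*δA = 0 (disjoint supports condition). Then for 𝐀 = [[I,A*],[A,I]] and δ𝐀 = [[0,δA*],[δA,0]], one has |(δ𝐀ψ,ψ)| ≤ (‖δA‖/√(1−b²)) (𝐀ψ,ψ) for all ψ ∈ X ⊕ X. -/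
/-!
Writing `ψ = (x, y)` and `z = y + A x`, the form of `𝐀` is `‖x‖² - ‖A x‖² + ‖z‖²
≥ (1 - b²)‖x‖² + ‖z‖²`, while that of `δ𝐀` is `2 Re ⟪δA x, y⟫`. The disjoint-supports
condition says exactly that `Re ⟪δA x, A x⟫ = 0`, so `y` may be replaced by `z`, and then
`2 |Re ⟪δA x, z⟫| ≤ 2 ‖δA‖ ‖x‖ ‖z‖ ≤ ‖δA‖ ((1 - b²)‖x‖² + ‖z‖²) / √(1 - b²)` by AM-GM.
-/

open scoped InnerProductSpace

open ContinuousLinearMap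

lemma two_mul_mul_mul_sqrt_le {s t a b : ℝ} (ha : 0 ≤ a) (has : a ≤ b * s) (hb : b ^ 2 ≤ 1) :
    2 * s * t * √(1 - b ^ 2) ≤ s ^ 2 - a ^ 2 + t ^ 2 := by
  have hq : √(1 - b ^ 2) ^ 2 = 1 - b ^ 2 := Real.sq_sqrt (by linarith)
  have ha2 : a ^ 2 ≤ (b * s) ^ 2 := pow_le_pow_left₀ ha has 2
  nlinarith [sq_nonneg (√(1 - b ^ 2) * s - t)]

section blockOp

variable {E : Type*} [NormedAddCommGroup E] [InnerProductSpace ℂ E]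

lemma inner_blockOp_apply_self (P Q R S : E →L[ℂ] E) (ψ : WithLp 2 (E × E)) :
    ⟪blockOp P Q R S ψ, ψ⟫_ℂ = ⟪P ψ.fst + Q ψ.snd, ψ.fst⟫_ℂ + ⟪R ψ.fst + S ψ.snd, ψ.snd⟫_ℂ := by
  rw [WithLp.prod_inner_apply]
  rfl

variable [CompleteSpace E]

lemma re_inner_blockOp_offDiag_apply_self (T : E →L[ℂ] E) (ψ : WithLp 2 (E × E)) :
    (⟪blockOp 0 (adjoint T) T 0 ψ, ψ⟫_ℂ).re = 2 * (⟪T ψ.fst, ψ.snd⟫_ℂ).re := by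
  rw [inner_blockOp_apply_self]
  simp only [zero_apply, zero_add, add_zero, adjoint_inner_left, Complex.add_re]
  simp only [← RCLike.re_to_complex, inner_re_symm ψ.snd]
  ring

lemma re_inner_blockOp_one_adjoint_apply_self (A : E →L[ℂ] E) (ψ : WithLp 2 (E × E)) :
    (⟪blockOp 1 (adjoint A) A 1 ψ, ψ⟫_ℂ).re =
      ‖ψ.fst‖ ^ 2 - ‖A ψ.fst‖ ^ 2 + ‖ψ.snd + A ψ.fst‖ ^ 2 := by
  rw [inner_blockOp_apply_self, @norm_add_sq ℂ]
  simp only [one_apply_eq_self, inner_add_left, adjoint_inner_left, Complex.add_re]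
  simp only [← RCLike.re_to_complex, inner_self_eq_norm_sq, inner_re_symm ψ.snd]
  ring

lemma re_inner_apply_eq_zero_of_adjoint_mul_add_adjoint_mul_eq_zero {A B : E →L[ℂ] E}
    (h : adjoint B * A + adjoint A * B = 0) (x : E) : (⟪B x, A x⟫_ℂ).re = 0 := by
  have hx := congrArg (fun T : E →L[ℂ] E => (⟪T x, x⟫_ℂ).re) h
  simp only [add_apply, mul_apply_eq_comp, inner_add_left, adjoint_inner_left, zero_apply,
    inner_zero_left, Complex.add_re, Complex.zero_re] at hx
  simp only [← RCLike.re_to_complex, inner_re_symm (A x)] at hx ⊢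
  linarith

end blockOp

/-- under the disjoint-supports condition `δA*A + A*δA = 0`, the form of
`δ𝐀 = [[0,δA*],[δA,0]]` is bounded by `‖δA‖/√(1-b²)` times the form of `𝐀 = [[I,A*],[A,I]]`. -/
theorem stmt_14 {E : Type*} [NormedAddCommGroup E] [InnerProductSpace ℂ E] [CompleteSpace E]
    (A δA : E →L[ℂ] E) (b : ℝ) (hA : ‖A‖ ≤ b) (hb : b < 1)
    (hdisj : ContinuousLinearMap.adjoint δA * A + ContinuousLinearMap.adjoint A * δA = 0) :
    ∀ ψ : WithLp 2 (E × E),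
      |(⟪blockOp 0 (ContinuousLinearMap.adjoint δA) δA 0 ψ, ψ⟫_ℂ).re| ≤
        ‖δA‖ / Real.sqrt (1 - b ^ 2) *
          (⟪blockOp 1 (ContinuousLinearMap.adjoint A) A 1 ψ, ψ⟫_ℂ).re := by
  intro ψ
  set x := ψ.fst
  set z := ψ.snd + A x
  have hb0 : 0 ≤ b := (norm_nonneg A).trans hA
  have hq : 0 < √(1 - b ^ 2) := Real.sqrt_pos.mpr (by nlinarith)
  have hAx : ‖A x‖ ≤ b * ‖x‖ := (A.le_opNorm x).trans (by gcongr)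
  have hshift : (⟪δA x, ψ.snd⟫_ℂ).re = (⟪δA x, z⟫_ℂ).re := by
    rw [inner_add_right, Complex.add_re,
      re_inner_apply_eq_zero_of_adjoint_mul_add_adjoint_mul_eq_zero hdisj, add_zero]
  have hbound : |(⟪δA x, z⟫_ℂ).re| ≤ ‖δA‖ * ‖x‖ * ‖z‖ :=
    calc |(⟪δA x, z⟫_ℂ).re| ≤ ‖δA x‖ * ‖z‖ :=
          (Complex.abs_re_le_norm _).trans (norm_inner_le_norm _ _)
      _ ≤ ‖δA‖ * ‖x‖ * ‖z‖ := by gcongr; exact δA.le_opNorm x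
  rw [re_inner_blockOp_offDiag_apply_self, re_inner_blockOp_one_adjoint_apply_self, hshift,
    abs_mul, abs_two, div_mul_eq_mul_div, le_div_iff₀ hq]
  calc 2 * |(⟪δA x, z⟫_ℂ).re| * √(1 - b ^ 2) ≤ ‖δA‖ * (2 * ‖x‖ * ‖z‖ * √(1 - b ^ 2)) := by
        nlinarith [mul_le_mul_of_nonneg_right hbound hq.le]
    _ ≤ ‖δA‖ * (‖x‖ ^ 2 - ‖A x‖ ^ 2 + ‖z‖ ^ 2) := by
        gcongr
        exact two_mul_mul_mul_sqrt_le (norm_nonneg _) hAx (by nlinarith)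
end
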